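/- arXiv:2409.03742 — 2 statements merged into one kernel-verified Lean document; each statement's English description precedes it below -/
import Mathlib

section
/- To check that a simplicial map f : Y → X of simplicial sets is ikeo, it suffices to check the ikeo pullback condition for the active map [0]→[0] (i.e. that f_0 : Y_0 → X_0 is a bijection) and for all active maps [2]→[n]: that is, f is ikeo if and only if f_0 : Y_0 → X_0 is a bijection and for every decomposition n = n_1 + n_2 the square with horizontal maps Y_n → Y_{n_1} × Y_{n_2} and X_n → X_{n_1} × X_{n_2} (given in both components by the inert maps of the canonical two-chart cover of [n]) and vertical maps induced by f is a pullback of sets. -/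
open CategoryTheory Opposite

namespace Crapo

/-- A commuting square of sets
`A → B`, `A → C`, `B → D`, `C → D` is a pullback (element-wise formulation). -/
def IsPullbackSq {A B C D : Type*} (f : A → B) (g : A → C) (h : B → D) (k : C → D) : Prop :=
  (∀ a, h (f a) = k (g a)) ∧ ∀ b c, h b = k c → ∃! a, f a = b ∧ g a = c

/-- `[n]` as an object of the simplex category. -/
abbrev Obj (n : ℕ) : SimplexCategory := SimplexCategory.mk n

/-- The set of `n`-simplices of a simplicial set. -/
abbrev Smp (X : SSet) (n : ℕ) : Type _ := X.obj (op (Obj n))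

/-- A morphism of the simplex category is *active* if it preserves endpoints. -/
def IsActive {x y : SimplexCategory} (φ : x ⟶ y) : Prop :=
  φ.toOrderHom 0 = 0 ∧ φ.toOrderHom (Fin.last x.len) = Fin.last y.len

/-- A morphism of the simplex category is *inert* if it is distance preserving. -/
def IsInert {x y : SimplexCategory} (φ : x ⟶ y) : Prop :=
  ∀ i : Fin x.len, (φ.toOrderHom i.succ : ℕ) = (φ.toOrderHom i.castSucc : ℕ) + 1

/-- The inert inclusion `[m] ↣ [n]` sending `0` to `a`. -/
def iota (m : ℕ) {n : ℕ} (a : ℕ) (h : a + m ≤ n) : Obj m ⟶ Obj n :=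
  SimplexCategory.mkHom
    ⟨fun j => ⟨a + j.1, by have := j.2; omega⟩,
     fun p q hpq => by
      simp only [Fin.mk_le_mk]
      have : p.1 ≤ q.1 := hpq
      omega⟩

/-- The `i`-th principal edge `ρ_i : [1] ↣ [k]` (an inert map). -/
def rho {k : ℕ} (i : Fin k) : Obj 1 ⟶ Obj k :=
  iota 1 i.1 (by have := i.2; omega)

/-- The unique active map `[1] → [n]`. -/
def longMap (n : ℕ) : Obj 1 ⟶ Obj n :=
  SimplexCategory.mkHom
    ⟨fun j => ⟨j.1 * n, by
        have h : j.1 ≤ 1 := Nat.lt_succ_iff.mp j.2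
        have : j.1 * n ≤ 1 * n := Nat.mul_le_mul_right n h
        omega⟩,
     fun p q hpq => by
      simp only [Fin.mk_le_mk]
      exact Nat.mul_le_mul_right n hpq⟩

/-- The long edge of an `n`-simplex. -/
def longEdge (X : SSet) (n : ℕ) (σ : Smp X n) : Smp X 1 := X.map (longMap n).op σ

/-- The vertex map `[0] → [n]` picking out vertex `i`. -/
def vmap {n : ℕ} (i : Fin (n + 1)) : Obj 0 ⟶ Obj n :=
  SimplexCategory.mkHom ⟨fun _ => i, fun _ _ _ => le_refl _⟩

lemma vmap_comp {n m : ℕ} (j : Fin (n + 1)) (φ : Obj n ⟶ Obj m) :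
    vmap j ≫ φ = vmap (φ.toOrderHom j) := by
  apply SimplexCategory.Hom.ext
  apply OrderHom.ext
  funext z
  rfl

/-- The source vertex of an edge. -/
def edgeSrc (X : SSet) : Smp X 1 → Smp X 0 := X.map (vmap (0 : Fin 2)).op

/-- The target vertex of an edge. -/
def edgeTgt (X : SSet) : Smp X 1 → Smp X 0 := X.map (vmap (1 : Fin 2)).op

/-- Nondegeneracy of a simplex: it is not in the image of any degeneracy map. -/
def Nondeg (X : SSet) : ∀ n : ℕ, Smp X n → Prop
  | 0 => fun _ => True
  | m + 1 => fun σ =>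
      ∀ (i : Fin (m + 1)) (τ : Smp X m), X.map (SimplexCategory.σ i).op τ ≠ σ

/-- A (set-valued) decomposition space: pushouts in `Δ` of active maps along
inert maps are sent to pullbacks of sets. -/
def DecompositionSpace (X : SSet) : Prop :=
  ∀ {a b c d : SimplexCategory} (f : a ⟶ b) (g : a ⟶ c) (h : b ⟶ d) (i : c ⟶ d),
    IsActive f → IsInert g → IsPushout f g h i →
    IsPullbackSq (X.map h.op) (X.map i.op) (X.map f.op) (X.map g.op)

/-- A simplicial set is complete if `s₀ : X₀ → X₁` is injective. -/
def CompleteS (X : SSet) : Prop :=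
  Function.Injective (X.map (SimplexCategory.σ (0 : Fin 1)).op : Smp X 0 → Smp X 1)

/-- A simplicial map is *ikeo* if for every active `α : [k] → [n]`, with
inert-active factorisations `ρ_i ≫ α = β_i ≫ γ_i`, the square with horizontal
maps `(γ_1,…,γ_k)*` and vertical maps induced by `f` is a pullback of sets. -/
def Ikeo {Y X : SSet} (f : Y ⟶ X) : Prop :=
  ∀ (k n : ℕ) (α : Obj k ⟶ Obj n), IsActive α →
    ∀ (ns : Fin k → ℕ) (γ : ∀ i, Obj (ns i) ⟶ Obj n) (β : ∀ i, Obj 1 ⟶ Obj (ns i)),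
      (∀ i, IsInert (γ i)) → (∀ i, IsActive (β i)) →
      (∀ i, rho i ≫ α = β i ≫ γ i) →
      IsPullbackSq
        (fun σ i => Y.map (γ i).op σ)
        (f.app (op (Obj n)))
        (fun v i => f.app (op (Obj (ns i))) (v i))
        (fun σ i => X.map (γ i).op σ)

/-- A simplicial map is *semi-ikeo* if the ikeo condition holds for every
*injective* active `α : [k] → [n]` with `k ≥ 1`. -/
def SemiIkeo {Y X : SSet} (f : Y ⟶ X) : Prop :=
  ∀ (k n : ℕ), 1 ≤ k → ∀ (α : Obj k ⟶ Obj n), IsActive α →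
    Function.Injective α.toOrderHom →
    ∀ (ns : Fin k → ℕ) (γ : ∀ i, Obj (ns i) ⟶ Obj n) (β : ∀ i, Obj 1 ⟶ Obj (ns i)),
      (∀ i, IsInert (γ i)) → (∀ i, IsActive (β i)) →
      (∀ i, rho i ≫ α = β i ≫ γ i) →
      IsPullbackSq
        (fun σ i => Y.map (γ i).op σ)
        (f.app (op (Obj n)))
        (fun v i => f.app (op (Obj (ns i))) (v i))
        (fun σ i => X.map (γ i).op σ)

/-- The iterated fibre product `X₁ ×_{X₀} ⋯ ×_{X₀} X₁` (`n` factors). -/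
def SegalSet (X : SSet) (n : ℕ) : Type _ :=
  { v : Fin n → Smp X 1 //
    ∀ (i : Fin n) (h : i.1 + 1 < n), edgeTgt X (v i) = edgeSrc X (v ⟨i.1 + 1, h⟩) }

/-- The Segal map `X_n → X₁ ×_{X₀} ⋯ ×_{X₀} X₁`. -/
def segalMap (X : SSet) (n : ℕ) (σ : Smp X n) : SegalSet X n :=
  ⟨fun i => X.map (rho i).op σ, by
    intro i h
    show X.map (vmap (1 : Fin 2)).op (X.map (rho i).op σ) =
      X.map (vmap (0 : Fin 2)).op (X.map (rho ⟨i.1 + 1, h⟩).op σ)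
    rw [← FunctorToTypes.map_comp_apply, ← FunctorToTypes.map_comp_apply,
      ← op_comp, ← op_comp, vmap_comp, vmap_comp]
    have e : (SimplexCategory.Hom.toOrderHom (rho i)) 1 =
        (SimplexCategory.Hom.toOrderHom (rho ⟨i.1 + 1, h⟩)) 0 := by
      apply Fin.ext
      simp [rho, iota]
      rfl
    rw [e]⟩

/-- The map on iterated fibre products induced by a simplicial map. -/
def segalInduced {Y X : SSet} (f : Y ⟶ X) (n : ℕ) : SegalSet Y n → SegalSet X n :=
  fun v => ⟨fun i => f.app (op (Obj 1)) (v.1 i), by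
    intro i h
    show X.map (vmap (1 : Fin 2)).op (f.app (op (Obj 1)) (v.1 i)) =
      X.map (vmap (0 : Fin 2)).op (f.app (op (Obj 1)) (v.1 ⟨i.1 + 1, h⟩))
    rw [← FunctorToTypes.naturality, ← FunctorToTypes.naturality]
    exact congrArg (f.app (op (Obj 0))) (v.2 i h)⟩

/-- A simplicial map is *inner Kan* (relatively Segal) if for each `n ≥ 2` the
square comparing the Segal maps is a pullback of sets. -/
def InnerKan {Y X : SSet} (f : Y ⟶ X) : Prop :=
  ∀ n : ℕ, 2 ≤ n →
    IsPullbackSq (segalMap Y n) (f.app (op (Obj n))) (segalInduced f n) (segalMap X n)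

/-- A simplicial map is *fully faithful* if for each `n` the square formed by
the vertex maps is a pullback of sets. -/
def FullyFaithfulMap {Y X : SSet} (f : Y ⟶ X) : Prop :=
  ∀ n : ℕ,
    IsPullbackSq
      (fun (σ : Smp Y n) (i : Fin (n + 1)) => Y.map (vmap i).op σ)
      (f.app (op (Obj n)))
      (fun v i => f.app (op (Obj 0)) (v i))
      (fun (σ : Smp X n) (i : Fin (n + 1)) => X.map (vmap i).op σ)

/-- A *full inclusion*: a fully faithful simplicial map, injective on `0`-simplices. -/
def FullIncl {Y X : SSet} (f : Y ⟶ X) : Prop :=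
  FullyFaithfulMap f ∧ Function.Injective (f.app (op (Obj 0)))

/-- A simplicial map is *culf* if its naturality square at every active map is
a pullback of sets. -/
def Culf {K X : SSet} (g : K ⟶ X) : Prop :=
  ∀ (m n : ℕ) (α : Obj m ⟶ Obj n), IsActive α →
    IsPullbackSq (K.map α.op) (g.app (op (Obj n))) (g.app (op (Obj m))) (X.map α.op)

/-- A simplicial map is *convex* if it is a full inclusion and culf. -/
def Convex {K X : SSet} (g : K ⟶ X) : Prop := FullIncl g ∧ Culf g

/-- `Φ_n`: the set of nondegenerate `n`-simplices. -/
def Phi (X : SSet) (n : ℕ) : Type _ := { σ : Smp X n // Nondeg X n σ }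

/-- The structure map of the functional `Φ_n`: the long edge. -/
def phiEdge (X : SSet) (n : ℕ) (a : Phi X n) : Smp X 1 := longEdge X n a.1

/-- Binary convolution of two linear functionals. -/
def Conv2 (X : SSet) {A B : Type*} (pa : A → Smp X 1) (pb : B → Smp X 1) : Type _ :=
  { t : Smp X 2 × A × B //
    pa t.2.1 = X.map (rho (0 : Fin 2)).op t.1 ∧
    pb t.2.2 = X.map (rho (1 : Fin 2)).op t.1 }

/-- The structure map of a binary convolution. -/
def conv2Edge (X : SSet) {A B : Type*} {pa : A → Smp X 1} {pb : B → Smp X 1}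
    (t : Conv2 X pa pb) : Smp X 1 := longEdge X 2 t.1.1

/-- Ternary convolution of three linear functionals. -/
def Conv3 (X : SSet) {A B C : Type*} (pa : A → Smp X 1) (pb : B → Smp X 1)
    (pc : C → Smp X 1) : Type _ :=
  { t : Smp X 3 × A × B × C //
    pa t.2.1 = X.map (rho (0 : Fin 3)).op t.1 ∧
    pb t.2.2.1 = X.map (rho (1 : Fin 3)).op t.1 ∧
    pc t.2.2.2 = X.map (rho (2 : Fin 3)).op t.1 }

/-- The structure map of a ternary convolution. -/
def conv3Edge (X : SSet) {A B C : Type*} {pa : A → Smp X 1} {pb : B → Smp X 1}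
    {pc : C → Smp X 1} (t : Conv3 X pa pb pc) : Smp X 1 := longEdge X 3 t.1.1

/-- `Φ_m^K` as a functional on `X`: nondegenerate `m`-simplices of `K` with
structure map the long edge, viewed in `X₁`. -/
def phiK {K X : SSet} (g : K ⟶ X) (m : ℕ) (a : Phi K m) : Smp X 1 :=
  g.app (op (Obj 1)) (phiEdge K m a)

/-- `Φ_p^{∉K}`: nondegenerate `p`-simplices of `X` none of whose principal
edges lies in `K`. -/
def PhiNotK {K X : SSet} (g : K ⟶ X) (p : ℕ) : Type _ :=
  { σ : Smp X p // Nondeg X p σ ∧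
      ∀ i : Fin p, X.map (rho i).op σ ∉ Set.range (g.app (op (Obj 1))) }

/-- The structure map of `Φ_p^{∉K}`. -/
def notKEdge {K X : SSet} (g : K ⟶ X) (p : ℕ) (a : PhiNotK g p) : Smp X 1 :=
  longEdge X p a.1

/-- `Φ_n^{∩K}`: nondegenerate `n`-simplices of `X` with at least one vertex in `K`. -/
def PhiCap {K X : SSet} (g : K ⟶ X) (n : ℕ) : Type _ :=
  { σ : Smp X n // Nondeg X n σ ∧
      ∃ i : Fin (n + 1), X.map (vmap i).op σ ∈ Set.range (g.app (op (Obj 0))) }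

/-- The structure map of `Φ_n^{∩K}`. -/
def capEdge {K X : SSet} (g : K ⟶ X) (n : ℕ) (a : PhiCap g n) : Smp X 1 :=
  longEdge X n a.1

/-- `Φ_n^{X∖K}`: nondegenerate `n`-simplices of `X` none of whose vertices lies
in `K` (i.e. nondegenerate simplices of the full hull of `X₀ ∖ K₀`). -/
def PhiComp {K X : SSet} (g : K ⟶ X) (n : ℕ) : Type _ :=
  { σ : Smp X n // Nondeg X n σ ∧
      ∀ i : Fin (n + 1), X.map (vmap i).op σ ∉ Set.range (g.app (op (Obj 0))) }

/-- The structure map of `Φ_n^{X∖K}`. -/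
def compEdge {K X : SSet} (g : K ⟶ X) (n : ℕ) (a : PhiComp g n) : Smp X 1 :=
  longEdge X n a.1

/-- `Φ_even`. -/
def PhiEven (X : SSet) : Type _ := Σ n : { n : ℕ // Even n }, Phi X n.1

/-- The structure map of `Φ_even`. -/
def evenEdge (X : SSet) (a : PhiEven X) : Smp X 1 := phiEdge X a.1.1 a.2

/-- `Φ_odd`. -/
def PhiOdd (X : SSet) : Type _ := Σ n : { n : ℕ // Odd n }, Phi X n.1

/-- The structure map of `Φ_odd`. -/
def oddEdge (X : SSet) (a : PhiOdd X) : Smp X 1 := phiEdge X a.1.1 a.2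

/-- `Φ_even^{X∖K}`. -/
def PhiCompEven {K X : SSet} (g : K ⟶ X) : Type _ :=
  Σ n : { n : ℕ // Even n }, PhiComp g n.1

/-- The structure map of `Φ_even^{X∖K}`. -/
def compEvenEdge {K X : SSet} (g : K ⟶ X) (a : PhiCompEven g) : Smp X 1 :=
  compEdge g a.1.1 a.2

/-- `Φ_odd^{X∖K}`. -/
def PhiCompOdd {K X : SSet} (g : K ⟶ X) : Type _ :=
  Σ n : { n : ℕ // Odd n }, PhiComp g n.1

/-- The structure map of `Φ_odd^{X∖K}`. -/
def compOddEdge {K X : SSet} (g : K ⟶ X) (a : PhiCompOdd g) : Smp X 1 :=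
  compEdge g a.1.1 a.2



lemma hom_ext_val {x y : SimplexCategory} {φ ψ : x ⟶ y}
    (h : ∀ j, (φ.toOrderHom j : ℕ) = (ψ.toOrderHom j : ℕ)) : φ = ψ := by
  apply SimplexCategory.Hom.ext; apply OrderHom.ext; funext j; exact Fin.ext (h j)

lemma iota_val {m n a : ℕ} (h : a + m ≤ n) (j : Fin (m + 1)) :
    ((iota m a h).toOrderHom j : ℕ) = a + j.1 := rfl

lemma comp_val {x y z : SimplexCategory} (φ : x ⟶ y) (ψ : y ⟶ z) (j) :
    (φ ≫ ψ).toOrderHom j = ψ.toOrderHom (φ.toOrderHom j) := rfl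

lemma iota_congr {m n a b : ℕ} (e : a = b) (h : a + m ≤ n) (h' : b + m ≤ n) :
    iota m a h = iota m b h' := by subst e; rfl

lemma iota_comp {m n' n a a' : ℕ} (h : a + m ≤ n') (h' : a' + n' ≤ n)
    (h'' : a' + a + m ≤ n) :
    iota m a h ≫ iota n' a' h' = iota m (a' + a) h'' := by
  apply hom_ext_val; intro j
  rw [comp_val, iota_val]
  show a' + (a + j.1) = a' + a + j.1
  omega

lemma inert_val {x y : SimplexCategory} {φ : x ⟶ y} (h : IsInert φ)
    (j : Fin (x.len + 1)) :
    (φ.toOrderHom j : ℕ) = (φ.toOrderHom 0 : ℕ) + j.1 := by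
  induction j using Fin.induction with
  | zero => simp
  | succ i ih => rw [h i, ih]; simp [Fin.val_succ]; omega

lemma isInert_iota {m n a : ℕ} (h : a + m ≤ n) : IsInert (iota m a h) := by
  intro i
  show a + (i.succ : ℕ) = a + (i.castSucc : ℕ) + 1
  simp [Fin.val_succ]; omega

lemma isActive_longMap (n : ℕ) : IsActive (longMap n) := by
  constructor <;> apply Fin.ext
  · show (0 : Fin 2).1 * n = (0 : Fin (n + 1)).1
    simp
  · show (Fin.last 1).1 * n = (Fin.last n).1
    simp

lemma factor_eq {k n : ℕ} {α : Obj k ⟶ Obj n} (i : Fin k) {m : ℕ}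
    {γ : Obj m ⟶ Obj n} {β : Obj 1 ⟶ Obj m} (hγ : IsInert γ) (hβ : IsActive β)
    (hf : rho i ≫ α = β ≫ γ) :
    ∃ h : (α.toOrderHom i.castSucc : ℕ) + m ≤ n,
      γ = iota m (α.toOrderHom i.castSucc : ℕ) h ∧
      (α.toOrderHom i.succ : ℕ) = (α.toOrderHom i.castSucc : ℕ) + m := by
  have hr0 : (rho i).toOrderHom (0 : Fin 2) = i.castSucc := by
    apply Fin.ext
    show i.1 + (0 : Fin 2).1 = i.1
    simp
  have hr1 : (rho i).toOrderHom (1 : Fin 2) = i.succ := by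
    apply Fin.ext
    show i.1 + (1 : Fin 2).1 = i.1 + 1
    simp
  have e0 : α.toOrderHom i.castSucc = γ.toOrderHom (0 : Fin (m + 1)) := by
    rw [← hr0, ← hβ.1, ← comp_val, ← comp_val, hf]
  have e1 : α.toOrderHom i.succ = γ.toOrderHom (Fin.last m) := by
    have : Fin.last (Obj 1).len = (1 : Fin 2) := rfl
    rw [← hr1, ← comp_val, hf, comp_val]
    have h2 : β.toOrderHom (1 : Fin 2) = Fin.last m := by
      rw [← this, hβ.2]
    rw [h2]
  have hlast : (γ.toOrderHom (Fin.last m) : ℕ) = (γ.toOrderHom 0 : ℕ) + m := by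
    rw [inert_val hγ]
    rfl
  have hb : (γ.toOrderHom (Fin.last m) : ℕ) ≤ n := Nat.lt_succ_iff.mp (γ.toOrderHom (Fin.last m)).2
  have hsum : (α.toOrderHom i.succ : ℕ) = (α.toOrderHom i.castSucc : ℕ) + m := by
    rw [e1, e0, hlast]
  refine ⟨by rw [e0]; omega, ?_, hsum⟩
  apply hom_ext_val; intro j
  rw [iota_val, inert_val hγ j, e0]

lemma comm_aux {Y X : SSet} (f : Y ⟶ X) {k n : ℕ} {ns : Fin k → ℕ}
    (γ : ∀ i, Obj (ns i) ⟶ Obj n) (a : Smp Y n) :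
    (fun v i => f.app (op (Obj (ns i))) (v i)) ((fun σ i => Y.map (γ i).op σ) a)
      = (fun σ i => X.map (γ i).op σ) (f.app (op (Obj n)) a) :=
  funext fun i => FunctorToTypes.naturality f (γ i).op a

lemma conv_aux {Y X : SSet} (f : Y ⟶ X)
    (h0 : Function.Bijective (f.app (op (Obj 0))))
    (hb : ∀ (n n1 n2 : ℕ), n1 + n2 = n → ∀ (h1 : 0 + n1 ≤ n) (h2 : n1 + n2 ≤ n),
      IsPullbackSq
        (fun σ : Smp Y n => (Y.map (iota n1 0 h1).op σ, Y.map (iota n2 n1 h2).op σ))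
        (f.app (op (Obj n)))
        (fun p => (f.app (op (Obj n1)) p.1, f.app (op (Obj n2)) p.2))
        (fun σ : Smp X n => (X.map (iota n1 0 h1).op σ, X.map (iota n2 n1 h2).op σ))) :
    ∀ (k n : ℕ) (α : Obj k ⟶ Obj n), IsActive α →
    ∀ (ns : Fin k → ℕ) (γ : ∀ i, Obj (ns i) ⟶ Obj n),
      (∀ i, ∃ h : (α.toOrderHom i.castSucc : ℕ) + ns i ≤ n,
        γ i = iota (ns i) (α.toOrderHom i.castSucc : ℕ) h) →
      (∀ i, (α.toOrderHom i.succ : ℕ) = (α.toOrderHom i.castSucc : ℕ) + ns i) →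
      IsPullbackSq (fun σ i => Y.map (γ i).op σ) (f.app (op (Obj n)))
        (fun v i => f.app (op (Obj (ns i))) (v i)) (fun σ i => X.map (γ i).op σ) := by
  intro k
  induction k with
  | zero =>
    intro n α hα ns γ _ _
    have hn : n = 0 := by
      have h1 : (α.toOrderHom (Fin.last 0) : ℕ) = n := congrArg Fin.val hα.2
      have h2 : Fin.last (0:ℕ) = (0 : Fin 1) := rfl
      have h3 : (α.toOrderHom 0 : ℕ) = 0 := by
        rw [hα.1]; rfl
      rw [h2, h3] at h1; omega
    subst hn
    refine ⟨comm_aux f γ, ?_⟩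
    intro b c _
    obtain ⟨a, ha⟩ := h0.2 c
    exact ⟨a, ⟨funext fun i => i.elim0, ha⟩,
      fun z hz => h0.1 (hz.2.trans ha.symm)⟩
  | succ k IH =>
    intro n α hα ns γ hγ hsum
    choose hpr hγe using hγ
    set L : Fin (k + 1) := Fin.last k with hL
    set n1 : ℕ := (α.toOrderHom L.castSucc : ℕ) with hn1
    set n2 : ℕ := ns L with hn2
    have hmono : ∀ p q : Fin (k + 2), p ≤ q →
        (α.toOrderHom p : ℕ) ≤ (α.toOrderHom q : ℕ) := fun p q h => α.toOrderHom.monotone h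
    have e : n1 + n2 = n := by
      have h1 := hsum L
      have h2 : L.succ = Fin.last (k + 1) := rfl
      have h3 : (α.toOrderHom (Fin.last (k + 1)) : ℕ) = n := congrArg Fin.val hα.2
      rw [h2, h3] at h1; omega
    have h1 : 0 + n1 ≤ n := by omega
    have h2 : n1 + n2 ≤ n := by omega
    have hbin := hb n n1 n2 e h1 h2
    have hle : ∀ j : Fin (k + 1), (α.toOrderHom j.castSucc : ℕ) ≤ n1 :=
      fun j => hmono _ _ (Fin.castSucc_le_castSucc_iff.mpr (Fin.le_last j))
    set α' : Obj k ⟶ Obj n1 := SimplexCategory.mkHom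
      ⟨fun j => ⟨(α.toOrderHom j.castSucc : ℕ), Nat.lt_succ_of_le (hle j)⟩,
       fun p q hpq => by
        simp only [Fin.mk_le_mk]
        exact hmono _ _ (Fin.castSucc_le_castSucc_iff.mpr hpq)⟩ with hα'def
    have hα' : IsActive α' := by
      constructor
      · apply Fin.ext
        show (α.toOrderHom ((0 : Fin (k+1)).castSucc) : ℕ) = (0 : Fin (n1 + 1)).1
        have : ((0 : Fin (k+1)).castSucc) = (0 : Fin (k+2)) := rfl
        rw [this, hα.1]; rfl
      · apply Fin.ext
        show (α.toOrderHom ((Fin.last k).castSucc) : ℕ) = (Fin.last n1).1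
        rfl
    have key : ∀ i : Fin k, (α.toOrderHom i.castSucc.castSucc : ℕ) + ns i.castSucc ≤ n1 := by
      intro i
      have ha := hsum i.castSucc
      rw [Fin.succ_castSucc] at ha
      have := hle i.succ
      omega
    set ns' : Fin k → ℕ := fun i => ns i.castSucc with hns'
    set γ' : ∀ i : Fin k, Obj (ns' i) ⟶ Obj n1 :=
      fun i => iota (ns i.castSucc) (α.toOrderHom i.castSucc.castSucc : ℕ) (key i) with hγ'
    have hIH := IH n1 α' hα' ns' γ'
      (fun i => ⟨key i, rfl⟩)
      (by
        intro i
        show (α.toOrderHom i.succ.castSucc : ℕ) = (α.toOrderHom i.castSucc.castSucc : ℕ) + ns i.castSucc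
        rw [← Fin.succ_castSucc]
        exact hsum i.castSucc)
    -- composition facts
    have hcomp : ∀ i : Fin k, γ' i ≫ iota n1 0 h1 = γ i.castSucc := by
      intro i
      rw [hγe i.castSucc]
      show iota (ns i.castSucc) (α.toOrderHom i.castSucc.castSucc : ℕ) (key i) ≫ iota n1 0 h1 = _
      rw [iota_comp (key i) h1 (by have := hpr i.castSucc; omega)]
      exact iota_congr (by omega) _ _
    have hγL : γ L = iota n2 n1 h2 := hγe L
    refine ⟨comm_aux f γ, ?_⟩
    intro b c hbc
    have hbci : ∀ i, f.app (op (Obj (ns i))) (b i) = X.map (γ i).op c := fun i => congrFun hbc i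
    set c1 : Smp X n1 := X.map (iota n1 0 h1).op c with hc1
    have hbc' : (fun i => f.app (op (Obj (ns' i))) (b i.castSucc))
        = fun i => X.map (γ' i).op c1 := by
      funext i
      rw [hbci i.castSucc, ← hcomp i, op_comp, FunctorToTypes.map_comp_apply]
    obtain ⟨a1, ⟨ha1b, ha1c⟩, ha1u⟩ := hIH.2 (fun i => b i.castSucc) c1 hbc'
    have hcompat : (f.app (op (Obj n1)) a1, f.app (op (Obj n2)) (b L))
        = (X.map (iota n1 0 h1).op c, X.map (iota n2 n1 h2).op c) := by
      rw [Prod.mk.injEq]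
      exact ⟨ha1c, by rw [hbci L, hγL]⟩
    obtain ⟨a, ⟨haY, hac⟩, hau⟩ := hbin.2 (a1, b L) c hcompat
    have haY1 : Y.map (iota n1 0 h1).op a = a1 := congrArg Prod.fst haY
    have haY2 : Y.map (iota n2 n1 h2).op a = b L := congrArg Prod.snd haY
    refine ⟨a, ⟨?_, hac⟩, ?_⟩
    · funext i
      induction i using Fin.lastCases with
      | last =>
        show Y.map (γ L).op a = b L
        rw [hγL]
        exact haY2
      | cast j =>
        show Y.map (γ j.castSucc).op a = b j.castSucc
        rw [← hcomp j, op_comp, FunctorToTypes.map_comp_apply, haY1]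
        exact congrFun ha1b j
    · rintro z ⟨hz1, hz2⟩
      have hz1' : ∀ i, Y.map (γ i).op z = b i := fun i => congrFun hz1 i
      apply hau
      refine ⟨?_, hz2⟩
      rw [Prod.mk.injEq]
      constructor
      · apply ha1u
        constructor
        · funext i
          show Y.map (γ' i).op (Y.map (iota n1 0 h1).op z) = b i.castSucc
          rw [← FunctorToTypes.map_comp_apply, ← op_comp, hcomp i]
          exact hz1' i.castSucc
        · rw [FunctorToTypes.naturality, hz2]
      · rw [← hγL]
        exact hz1' L

def alpha2 (n1 n2 : ℕ) : Obj 2 ⟶ Obj (n1 + n2) :=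
  SimplexCategory.mkHom
    ⟨fun j => ⟨if j.1 = 0 then 0 else if j.1 = 1 then n1 else n1 + n2,
      by split_ifs <;> omega⟩,
     fun p q hpq => by
      simp only [Fin.mk_le_mk]
      have : p.1 ≤ q.1 := hpq
      split_ifs <;> omega⟩

lemma isActive_alpha2 (n1 n2 : ℕ) : IsActive (alpha2 n1 n2) := by
  constructor <;> apply Fin.ext
  · show (if (0 : Fin 3).1 = 0 then 0 else if (0 : Fin 3).1 = 1 then n1 else n1 + n2)
      = (0 : Fin (n1 + n2 + 1)).1
    simp
  · show (if (Fin.last 2).1 = 0 then 0 else if (Fin.last 2).1 = 1 then n1 else n1 + n2)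
      = (Fin.last (n1 + n2)).1
    simp [Fin.last]

lemma alpha2_val (n1 n2 : ℕ) (j : Fin 3) :
    ((alpha2 n1 n2).toOrderHom j : ℕ)
      = if j.1 = 0 then 0 else if j.1 = 1 then n1 else n1 + n2 := rfl


/-- A simplicial map is ikeo iff `f₀` is a bijection and for every
decomposition `n = n₁ + n₂` the square given by the two-chart cover of `[n]`
is a pullback of sets. -/
theorem ikeo_iff_zero_and_binary {Y X : SSet} (f : Y ⟶ X) :
    Ikeo f ↔
      (Function.Bijective (f.app (op (Obj 0))) ∧
        ∀ n1 n2 : ℕ,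
          IsPullbackSq
            (fun (σ : Smp Y (n1 + n2)) =>
              (Y.map (iota n1 (n := n1 + n2) 0 (by omega)).op σ,
               Y.map (iota n2 (n := n1 + n2) n1 (by omega)).op σ))
            (f.app (op (Obj (n1 + n2))))
            (fun p => (f.app (op (Obj n1)) p.1, f.app (op (Obj n2)) p.2))
            (fun (σ : Smp X (n1 + n2)) =>
              (X.map (iota n1 (n := n1 + n2) 0 (by omega)).op σ,
               X.map (iota n2 (n := n1 + n2) n1 (by omega)).op σ))) := by
  constructor
  · intro hIk
    refine ⟨?_, ?_⟩
    · -- f₀ is a bijection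
      have hact : IsActive (𝟙 (Obj 0)) := ⟨rfl, rfl⟩
      have hP := hIk 0 0 (𝟙 (Obj 0)) hact (fun i => i.elim0) (fun i => i.elim0)
        (fun i => i.elim0) (fun i => i.elim0) (fun i => i.elim0) (fun i => i.elim0)
      constructor
      · intro a a' h
        obtain ⟨z, hz, hu⟩ := hP.2 (fun i => i.elim0) (f.app (op (Obj 0)) a)
          (funext fun i => i.elim0)
        have h1 := hu a ⟨funext fun i => i.elim0, rfl⟩
        have h2 := hu a' ⟨funext fun i => i.elim0, h.symm⟩
        rw [h1, h2]
      · intro c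
        obtain ⟨a, ⟨_, hac⟩, _⟩ := hP.2 (fun i => i.elim0) c (funext fun i => i.elim0)
        exact ⟨a, hac⟩
    · -- binary condition
      intro n1 n2
      have rho_val : ∀ (m : ℕ) (i : Fin m) (j : Fin 2),
        ((rho i).toOrderHom j : ℕ) = i.1 + j.1 := fun _ _ _ => rfl
      have long_val : ∀ (m : ℕ) (j : Fin 2),
        ((longMap m).toOrderHom j : ℕ) = j.1 * m := fun _ _ => rfl
      set ns : Fin 2 → ℕ := fun i => if i.1 = 0 then n1 else n2 with hns
      set γ2 : ∀ i : Fin 2, Obj (ns i) ⟶ Obj (n1 + n2) :=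
        fun i => Fin.cases (iota n1 0 (by omega)) (fun _ => iota n2 n1 (by omega)) i with hγ2
      set β2 : ∀ i : Fin 2, Obj 1 ⟶ Obj (ns i) :=
        fun i => Fin.cases (longMap n1) (fun _ => longMap n2) i with hβ2
      have hf0 : rho (0 : Fin 2) ≫ alpha2 n1 n2 = β2 0 ≫ γ2 0 := by
        apply hom_ext_val; intro j
        rw [comp_val, comp_val, alpha2_val, rho_val]
        show _ = (((γ2 0).toOrderHom ((longMap n1).toOrderHom j)) : ℕ)
        have h1 : (((γ2 0).toOrderHom ((longMap n1).toOrderHom j)) : ℕ)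
            = 0 + j.1 * n1 := rfl
        rw [h1]
        have hj : j.1 = 0 ∨ j.1 = 1 := by have : j.1 < 2 := j.2; omega
        rcases hj with h | h <;> simp [h]
      have hf1 : rho (1 : Fin 2) ≫ alpha2 n1 n2 = β2 1 ≫ γ2 1 := by
        apply hom_ext_val; intro j
        rw [comp_val, comp_val, alpha2_val, rho_val]
        show _ = (((γ2 1).toOrderHom ((longMap n2).toOrderHom j)) : ℕ)
        have h1 : (((γ2 1).toOrderHom ((longMap n2).toOrderHom j)) : ℕ)
            = n1 + j.1 * n2 := rfl
        rw [h1]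
        have hj : j.1 = 0 ∨ j.1 = 1 := by have : j.1 < 2 := j.2; omega
        rcases hj with h | h <;> simp [h]
      have hfact : ∀ i : Fin 2, rho i ≫ alpha2 n1 n2 = β2 i ≫ γ2 i := fun i =>
        match i with
        | 0 => hf0
        | 1 => hf1
      have hin : ∀ i : Fin 2, IsInert (γ2 i) := fun i =>
        match i with
        | 0 => isInert_iota (m := n1) (n := n1 + n2) (a := 0) (by omega)
        | 1 => isInert_iota (m := n2) (n := n1 + n2) (a := n1) (by omega)
      have hac : ∀ i : Fin 2, IsActive (β2 i) := fun i =>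
        match i with
        | 0 => isActive_longMap n1
        | 1 => isActive_longMap n2
      have hP := hIk 2 (n1 + n2) (alpha2 n1 n2) (isActive_alpha2 n1 n2) ns γ2 β2
        hin hac hfact
      constructor
      · intro a
        exact Prod.ext (FunctorToTypes.naturality f _ a)
          (FunctorToTypes.naturality f _ a)
      · intro b c hbc
        have hbc1 := congrArg Prod.fst hbc
        have hbc2 := congrArg Prod.snd hbc
        have hbcf : (fun i => f.app (op (Obj (ns i)))
              ((fun i : Fin 2 => match i with | 0 => b.1 | 1 => b.2 : ∀ i, Smp Y (ns i)) i))
            = fun i => X.map (γ2 i).op c := by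
          funext i
          match i with
          | 0 => exact hbc1
          | 1 => exact hbc2
        obtain ⟨a, ⟨haY, hacc⟩, hau⟩ := hP.2
          (fun i : Fin 2 => match i with | 0 => b.1 | 1 => b.2) c hbcf
        refine ⟨a, ⟨Prod.ext (congrFun haY 0) (congrFun haY 1), hacc⟩, ?_⟩
        rintro z ⟨hz1, hz2⟩
        apply hau
        refine ⟨funext fun i => ?_, hz2⟩
        match i with
        | 0 => exact congrArg Prod.fst hz1
        | 1 => exact congrArg Prod.snd hz1
  · rintro ⟨h0, hb⟩
    intro k n α hα ns γ β hγin hβac hfa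
    have hb' : ∀ (n n1 n2 : ℕ), n1 + n2 = n → ∀ (h1 : 0 + n1 ≤ n) (h2 : n1 + n2 ≤ n),
        IsPullbackSq
          (fun σ : Smp Y n => (Y.map (iota n1 0 h1).op σ, Y.map (iota n2 n1 h2).op σ))
          (f.app (op (Obj n)))
          (fun p => (f.app (op (Obj n1)) p.1, f.app (op (Obj n2)) p.2))
          (fun σ : Smp X n => (X.map (iota n1 0 h1).op σ, X.map (iota n2 n1 h2).op σ)) := by
      intro n n1 n2 e h1 h2
      subst e
      exact hb n1 n2
    refine conv_aux f h0 hb' k n α hα ns γ (fun i => ?_) (fun i => ?_)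
    · obtain ⟨h, he, _⟩ := factor_eq i (hγin i) (hβac i) (hfa i)
      exact ⟨h, he⟩
    · obtain ⟨_, _, hs⟩ := factor_eq i (hγin i) (hβac i) (hfa i)
      exact hs


end Crapo
end

section
/- A simplicial map f : Y → X of simplicial sets is ikeo if and only if it is inner Kan (relatively Segal) and f_0 : Y_0 → X_0 is a bijection. -/
open CategoryTheory Opposite

namespace Crapo

/- ### Auxiliary lemmas -/

lemma hom_ext' {x y : SimplexCategory} (φ ψ : x ⟶ y)
    (h : ∀ j, (φ.toOrderHom j : ℕ) = (ψ.toOrderHom j : ℕ)) : φ = ψ := by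
  apply SimplexCategory.Hom.ext
  apply OrderHom.ext
  funext j
  exact Fin.ext (h j)

lemma inert_eval {x y : SimplexCategory} (φ : x ⟶ y) (h : IsInert φ)
    (j : Fin (x.len + 1)) :
    (φ.toOrderHom j : ℕ) = (φ.toOrderHom 0 : ℕ) + j.1 := by
  obtain ⟨v, hv⟩ := j
  induction v with
  | zero =>
    have : (⟨0, hv⟩ : Fin (x.len + 1)) = 0 := Fin.ext rfl
    rw [this]
    simp
  | succ w ih =>
    have hw : w < x.len + 1 := by omega
    have hsw : w < x.len := by omega
    have key := h ⟨w, hsw⟩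
    have e1 : (⟨w, hsw⟩ : Fin x.len).succ = ⟨w + 1, hv⟩ := rfl
    have e2 : (⟨w, hsw⟩ : Fin x.len).castSucc = ⟨w, hw⟩ := rfl
    rw [e1, e2] at key
    have ihw := ih hw
    simp only [Fin.val_mk] at key ihw ⊢
    omega

lemma pb_inj {A B C D : Type*} {f : A → B} {g : A → C} {h : B → D} {k : C → D}
    (H : IsPullbackSq f g h k) {u u' : A} (h1 : f u = f u') (h2 : g u = g u') :
    u = u' := by
  obtain ⟨a, -, ha⟩ := H.2 (f u) (g u) (by rw [H.1])
  rw [ha u ⟨rfl, rfl⟩, ha u' ⟨h1.symm, h2.symm⟩]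

lemma rho_id : rho (0 : Fin 1) = 𝟙 (Obj 1) := by
  apply hom_ext'
  intro j
  simp [rho, iota, SimplexCategory.Hom.id]

lemma rho_inert {k : ℕ} (i : Fin k) : IsInert (rho i) := by
  intro j
  show i.1 + (j.succ).1 = i.1 + (j.castSucc).1 + 1
  simp [Fin.val_succ]
  try omega

lemma id_active (n : ℕ) : IsActive (𝟙 (Obj n)) := ⟨rfl, rfl⟩

lemma rho_val {k : ℕ} (i : Fin k) (j : Fin 2) :
    (((rho i).toOrderHom) j : ℕ) = i.1 + j.1 := rfl

lemma interval_lookup (k : ℕ) (a : Fin (k+1) → ℕ) (ns : Fin k → ℕ)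
    (a0 : a 0 = 0) (astep : ∀ i : Fin k, a i.succ = a i.castSucc + ns i)
    (t : ℕ) (ht : t < a (Fin.last k)) :
    ∃ (i : Fin k) (j : Fin (ns i)), t = a i.castSucc + j.1 := by
  have main : ∀ m : ℕ, ∀ hm : m ≤ k, t < a ⟨m, by omega⟩ →
      ∃ (i : Fin k) (j : Fin (ns i)), t = a i.castSucc + j.1 := by
    intro m
    induction m with
    | zero =>
      intro hm ht'
      have e : (⟨0, by omega⟩ : Fin (k + 1)) = 0 := Fin.ext rfl
      rw [e, a0] at ht'
      omega
    | succ w ih =>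
      intro hm ht'
      have hwk : w < k := by omega
      by_cases hcase : t < a ⟨w, by omega⟩
      · exact ih (by omega) hcase
      · push_neg at hcase
        have hwk1 : w < k + 1 := by omega
        have hwk2 : w + 1 < k + 1 := by omega
        have hstep := astep ⟨w, hwk⟩
        have ec : (⟨w, hwk⟩ : Fin k).castSucc = ⟨w, hwk1⟩ := rfl
        have es : (⟨w, hwk⟩ : Fin k).succ = ⟨w + 1, hwk2⟩ := rfl
        rw [ec, es] at hstep
        have hcase' : a ⟨w, hwk1⟩ ≤ t := by
          have e' : (⟨w, by omega⟩ : Fin (k+1)) = ⟨w, hwk1⟩ := rfl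
          rw [e'] at hcase
          exact hcase
        have ht'' : t < a ⟨w + 1, hwk2⟩ := ht'
        have hjlt : t - a ⟨w, hwk1⟩ < ns ⟨w, hwk⟩ := by omega
        exact ⟨⟨w, hwk⟩, ⟨t - a ⟨w, hwk1⟩, hjlt⟩, by rw [ec]; simp only [Fin.val_mk]; omega⟩
  have e : (Fin.last k) = ⟨k, by omega⟩ := rfl
  rw [e] at ht
  exact main k le_rfl ht

lemma bcong {Y : SSet} {k : ℕ} {ns : Fin k → ℕ} (b : ∀ i, Smp Y (ns i))
    {i i' : Fin k} (h : i = i') {j : Fin (ns i)} {j' : Fin (ns i')}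
    (hj : j.1 = j'.1) :
    Y.map (rho j).op (b i) = Y.map (rho j').op (b i') := by
  subst h
  rw [show j = j' from Fin.ext hj]

/-- The full (product-form) relative Segal square is a pullback, given
`InnerKan` and bijectivity on `0`-simplices. -/
lemma fullSegal {Y X : SSet} (f : Y ⟶ X) (hIK : InnerKan f)
    (hbij : Function.Bijective (f.app (op (Obj 0)))) (m : ℕ) :
    IsPullbackSq
      (fun (σ : Smp Y m) (i : Fin m) => Y.map (rho i).op σ)
      (f.app (op (Obj m)))
      (fun v i => f.app (op (Obj 1)) (v i))
      (fun (σ : Smp X m) (i : Fin m) => X.map (rho i).op σ) := by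
  constructor
  · intro σ
    funext i
    exact FunctorToTypes.naturality f (rho i).op σ
  · intro b c hbc
    have hbc' : ∀ i : Fin m, f.app (op (Obj 1)) (b i) = X.map (rho i).op c :=
      fun i => congrFun hbc i
    match m, b, c, hbc' with
    | 0, b, c, hbc' =>
      obtain ⟨a, ha⟩ := hbij.2 c
      refine ⟨a, ⟨funext fun i => i.elim0, ha⟩, ?_⟩
      rintro a' ⟨-, ha'⟩
      exact hbij.1 (ha'.trans ha.symm)
    | 1, b, c, hbc' =>
      have h0 : ∀ (Z : SSet) (z : Smp Z 1), Z.map (rho (0 : Fin 1)).op z = z := by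
        intro Z z
        rw [rho_id]
        simp
      refine ⟨b 0, ⟨funext fun i => ?_, ?_⟩, ?_⟩
      · show Y.map (rho i).op (b 0) = b i
        have : i = 0 := Subsingleton.elim _ _
        subst this
        exact h0 Y (b 0)
      · rw [hbc' 0]
        exact h0 X c
      · rintro a' ⟨h1, -⟩
        have h2 : Y.map (rho (0 : Fin 1)).op a' = b 0 := congrFun h1 0
        rw [h0] at h2
        exact h2
    | (q + 2), b, c, hbc' =>
      have hseg : ∀ (i : Fin (q + 2)) (h : i.1 + 1 < q + 2),
          edgeTgt Y (b i) = edgeSrc Y (b ⟨i.1 + 1, h⟩) := by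
        intro i h
        apply hbij.1
        have n1 : f.app (op (Obj 0)) (edgeTgt Y (b i)) =
            edgeTgt X (f.app (op (Obj 1)) (b i)) :=
          FunctorToTypes.naturality f (vmap (1 : Fin 2)).op (b i)
        have n2 : f.app (op (Obj 0)) (edgeSrc Y (b ⟨i.1 + 1, h⟩)) =
            edgeSrc X (f.app (op (Obj 1)) (b ⟨i.1 + 1, h⟩)) :=
          FunctorToTypes.naturality f (vmap (0 : Fin 2)).op _
        rw [n1, n2, hbc' i, hbc' ⟨i.1 + 1, h⟩]
        exact (segalMap X (q + 2) c).2 i h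
      have hcond : segalInduced f (q + 2) ⟨b, hseg⟩ = segalMap X (q + 2) c :=
        Subtype.ext (funext fun i => hbc' i)
      obtain ⟨a, ⟨ha1, ha2⟩, hu⟩ := (hIK (q + 2) (by omega)).2 ⟨b, hseg⟩ c hcond
      refine ⟨a, ⟨congrArg Subtype.val ha1, ha2⟩, ?_⟩
      rintro a' ⟨h1, h2⟩
      exact hu a' ⟨Subtype.ext h1, h2⟩

/-- A simplicial map is ikeo iff it is inner Kan (relatively Segal) and a
bijection on `0`-simplices. -/
theorem ikeo_iff_innerKan_and_bijective_on_objects {Y X : SSet} (f : Y ⟶ X) :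
    Ikeo f ↔ (InnerKan f ∧ Function.Bijective (f.app (op (Obj 0)))) := by
  constructor
  · intro hI
    have P0 := hI 0 0 (𝟙 (Obj 0)) (id_active 0) (fun i => i.elim0) (fun i => i.elim0)
      (fun i => i.elim0) (fun i => i.elim0) (fun i => i.elim0) (fun i => i.elim0)
    constructor
    · -- InnerKan
      intro n hn
      have P := hI n n (𝟙 (Obj n)) (id_active n) (fun _ => 1) (fun i => rho i)
        (fun _ => 𝟙 (Obj 1)) (fun i => rho_inert i) (fun _ => id_active 1)
        (fun i => by simp)
      constructor
      · intro σ
        apply Subtype.ext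
        funext i
        exact FunctorToTypes.naturality f (rho i).op σ
      · intro B c hBc
        have hBc' : (fun v (i : Fin n) => f.app (op (Obj 1)) (v i)) B.1
            = (fun σ (i : Fin n) => X.map (rho i).op σ) c := by
          funext i
          exact congrFun (congrArg Subtype.val hBc) i
        obtain ⟨σ, ⟨h1, h2⟩, hu⟩ := P.2 B.1 c hBc'
        refine ⟨σ, ⟨Subtype.ext h1, h2⟩, ?_⟩
        rintro σ' ⟨g1, g2⟩
        exact hu σ' ⟨congrArg Subtype.val g1, g2⟩
    · -- bijective on 0-simplices
      constructor
      · intro u u' huu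
        exact pb_inj P0 (funext fun i => i.elim0) huu
      · intro c
        obtain ⟨u, ⟨-, hu⟩, -⟩ := P0.2 (fun i => i.elim0) c (funext fun i => i.elim0)
        exact ⟨u, hu⟩
  · rintro ⟨hIK, hbij⟩
    intro k n α hα ns γ β hγ hβ hcomm
    set a : Fin (k + 1) → ℕ := fun i => (α.toOrderHom i : ℕ) with hadef
    have a0 : a 0 = 0 := congrArg Fin.val hα.1
    have alast : a (Fin.last k) = n := congrArg Fin.val hα.2
    have amono : ∀ p q : Fin (k + 1), p.1 ≤ q.1 → a p ≤ a q := by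
      intro p q h
      exact α.toOrderHom.monotone h
    -- endpoints of the inert pieces
    have key : ∀ i : Fin k,
        ((γ i).toOrderHom 0 : ℕ) = a i.castSucc ∧
        a i.succ = a i.castSucc + ns i := by
      intro i
      have r0 : (rho i).toOrderHom (0 : Fin 2) = i.castSucc := by
        apply Fin.ext
        rw [rho_val]
        simp
      have r1 : (rho i).toOrderHom (1 : Fin 2) = i.succ := by
        apply Fin.ext
        rw [rho_val]
        simp
      have h0 : α.toOrderHom ((rho i).toOrderHom (0 : Fin 2))
          = (γ i).toOrderHom ((β i).toOrderHom (0 : Fin 2)) :=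
        congrArg (fun φ : Obj 1 ⟶ Obj n =>
          (SimplexCategory.Hom.toOrderHom φ) (0 : Fin 2)) (hcomm i)
      have h1 : α.toOrderHom ((rho i).toOrderHom (1 : Fin 2))
          = (γ i).toOrderHom ((β i).toOrderHom (1 : Fin 2)) :=
        congrArg (fun φ : Obj 1 ⟶ Obj n =>
          (SimplexCategory.Hom.toOrderHom φ) (1 : Fin 2)) (hcomm i)
      rw [r0, (hβ i).1] at h0
      have e2 : (1 : Fin 2) = Fin.last (Obj 1).len := Fin.ext rfl
      rw [r1, e2, (hβ i).2] at h1
      constructor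
      · exact (congrArg Fin.val h0).symm
      · have hv := congrArg Fin.val h1
        rw [inert_eval (γ i) (hγ i) (Fin.last (Obj (ns i)).len)] at hv
        have hlv : (Fin.last (Obj (ns i)).len).1 = ns i := rfl
        rw [hlv] at hv
        have hv0 := congrArg Fin.val h0
        simp only [hadef]
        omega
    have astep : ∀ i : Fin k, a i.succ = a i.castSucc + ns i := fun i => (key i).2
    have hγ0 : ∀ i : Fin k, ((γ i).toOrderHom 0 : ℕ) = a i.castSucc := fun i => (key i).1
    clear_value a
    have hlt : ∀ (i : Fin k) (j : Fin (ns i)), a i.castSucc + j.1 < n := by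
      intro i j
      have h1 := astep i
      have h2 : a i.succ ≤ a (Fin.last k) := amono _ _ (by
        have := i.succ.2
        simp [Fin.last])
      have hj := j.2
      omega
    have rho_comp : ∀ (i : Fin k) (j : Fin (ns i)),
        rho j ≫ γ i = rho (⟨a i.castSucc + j.1, hlt i j⟩ : Fin n) := by
      intro i j
      apply hom_ext'
      intro z
      show ((γ i).toOrderHom ((rho j).toOrderHom z) : ℕ) =
        ((rho (⟨a i.castSucc + j.1, hlt i j⟩ : Fin n)).toOrderHom z : ℕ)
      rw [inert_eval (γ i) (hγ i), hγ0 i, rho_val, rho_val]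
      simp only [Fin.val_mk]
      omega
    -- interval lookup
    have lookup : ∀ t : Fin n, ∃ (i : Fin k) (j : Fin (ns i)),
        t.1 = a i.castSucc + j.1 := fun t =>
      interval_lookup k a ns a0 astep t.1 (by rw [alast]; exact t.2)
    choose idx jdx spec using lookup
    have rho_total : ∀ t : Fin n, rho (jdx t) ≫ γ (idx t) = rho t := by
      intro t
      rw [rho_comp]
      exact congrArg rho (Fin.ext (spec t).symm)
    constructor
    · intro σ
      funext i
      exact FunctorToTypes.naturality f (γ i).op σ
    · intro b c hbc
      have hbc' : ∀ i, f.app (op (Obj (ns i))) (b i) = X.map (γ i).op c :=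
        fun i => congrFun hbc i
      have hfB : (fun v (i : Fin n) => f.app (op (Obj 1)) (v i))
            (fun t => Y.map (rho (jdx t)).op (b (idx t)))
          = (fun σ (i : Fin n) => X.map (rho i).op σ) c := by
        funext t
        show f.app (op (Obj 1)) (Y.map (rho (jdx t)).op (b (idx t)))
          = X.map (rho t).op c
        rw [show f.app (op (Obj 1)) (Y.map (rho (jdx t)).op (b (idx t))) = X.map (rho (jdx t)).op (f.app _ (b (idx t))) from FunctorToTypes.naturality f (rho (jdx t)).op (b (idx t)),
          hbc' (idx t), ← FunctorToTypes.map_comp_apply, ← op_comp, rho_total t]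
      obtain ⟨σ, ⟨hσ1, hσ2⟩, huniq⟩ := (fullSegal f hIK hbij n).2
        (fun t => Y.map (rho (jdx t)).op (b (idx t))) c hfB
      have hσ1' : ∀ t : Fin n, Y.map (rho t).op σ
          = Y.map (rho (jdx t)).op (b (idx t)) := fun t => congrFun hσ1 t
      have decomp_unique : ∀ (t : Fin n) (i : Fin k) (j : Fin (ns i)),
          t.1 = a i.castSucc + j.1 → idx t = i := by
        intro t i j hj
        have hs := spec t
        have hjb := j.2
        have hjb' := (jdx t).2
        have hstep1 := astep (idx t)
        have hstep2 := astep i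
        by_contra hne
        have hvne : (idx t).1 ≠ i.1 := fun hv => hne (Fin.ext hv)
        rcases Nat.lt_or_ge (idx t).1 i.1 with hlt' | hge
        · have hle : a (idx t).succ ≤ a i.castSucc := amono _ _ (by
            simp [Fin.val_succ]
            omega)
          omega
        · have hle : a i.succ ≤ a (idx t).castSucc := amono _ _ (by
            simp [Fin.val_succ]
            omega)
          omega
      refine ⟨σ, ⟨funext fun i => ?_, hσ2⟩, ?_⟩
      · show Y.map (γ i).op σ = b i
        apply pb_inj (fullSegal f hIK hbij (ns i))
        · funext j
          show Y.map (rho j).op (Y.map (γ i).op σ)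
            = Y.map (rho j).op (b i)
          rw [← FunctorToTypes.map_comp_apply, ← op_comp, rho_comp i j,
            hσ1' ⟨a i.castSucc + j.1, hlt i j⟩]
          have hidx : idx ⟨a i.castSucc + j.1, hlt i j⟩ = i :=
            decomp_unique _ i j rfl
          have hsp := spec (⟨a i.castSucc + j.1, hlt i j⟩ : Fin n)
          have ht1 : ((⟨a i.castSucc + j.1, hlt i j⟩ : Fin n)).1
              = a i.castSucc + j.1 := rfl
          rw [ht1] at hsp
          have hca : a (idx ⟨a i.castSucc + j.1, hlt i j⟩).castSucc
              = a i.castSucc := congrArg (fun z : Fin k => a z.castSucc) hidx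
          exact bcong b hidx (by omega)
        · show f.app (op (Obj (ns i))) (Y.map (γ i).op σ)
            = f.app (op (Obj (ns i))) (b i)
          rw [show f.app (op (Obj (ns i))) (Y.map (γ i).op σ) = X.map (γ i).op (f.app _ σ) from FunctorToTypes.naturality f (γ i).op σ, hσ2, hbc' i]
      · rintro σ' ⟨h1, h2⟩
        apply huniq σ'
        refine ⟨funext fun t => ?_, h2⟩
        show Y.map (rho t).op σ' = Y.map (rho (jdx t)).op (b (idx t))
        have h1' : Y.map (γ (idx t)).op σ' = b (idx t) := congrFun h1 (idx t)
        rw [← h1', ← FunctorToTypes.map_comp_apply, ← op_comp, rho_total t]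

end Crapo
end
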